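/- arXiv:2105.05543 — 6 statements merged into one kernel-verified Lean document; each statement's English description precedes it below -/
import Mathlib

section
/- For every (x,y,z) ∈ ℂ³ with z² = xy there exist traceless 2×2 complex matrices A and B with AB = BA such that tr(A²) = x, tr(B²) = y and tr(AB) = z. -/
/-!
All points of the cone are reached by multiples `A = s • H`, `B = t • H` of `H = diag(1, -1)`:
then `(tr A², tr B², tr AB) = 2 (s², t², st)`, and `z² = xy` is exactly the condition for choosing
square roots `s` of `x / 2` and `t` of `y / 2` with `st = z / 2` (flip the sign of `t` if needed).
-/

open Matrix

theorem exists_sq_eq_sq_eq_mul_eq {K : Type*} [Field K] [IsAlgClosed K] {x y z : K}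
    (h : z ^ 2 = x * y) : ∃ s t : K, s ^ 2 = x ∧ t ^ 2 = y ∧ s * t = z := by
  obtain ⟨s, hs⟩ := IsAlgClosed.exists_pow_nat_eq x two_pos
  obtain ⟨t, ht⟩ := IsAlgClosed.exists_pow_nat_eq y two_pos
  have hst : (s * t) ^ 2 = z ^ 2 := by rw [mul_pow, hs, ht, h]
  rcases sq_eq_sq_iff_eq_or_eq_neg.mp hst with hz | hz
  · exact ⟨s, t, hs, ht, hz⟩
  · exact ⟨s, -t, hs, by rw [neg_sq, ht], by rw [mul_neg, hz, neg_neg]⟩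

theorem trace_smul_mul_smul {n R : Type*} [Fintype n] [CommRing R] (M : Matrix n n R) (s t : R) :
    ((s • M) * (t • M)).trace = s * t * (M * M).trace := by
  rw [smul_mul_smul_comm, trace_smul, smul_eq_mul]

/-- Every point of the cone `{(x,y,z) ∈ ℂ³ : z² = xy}` is of the form
`(tr(A²), tr(B²), tr(AB))` for a commuting pair of traceless `2×2` complex matrices. -/
theorem statement1 (x y z : ℂ) (h : z ^ 2 = x * y) :
    ∃ A B : Matrix (Fin 2) (Fin 2) ℂ, A.trace = 0 ∧ B.trace = 0 ∧ A * B = B * A ∧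
      (A * A).trace = x ∧ (B * B).trace = y ∧ (A * B).trace = z := by
  obtain ⟨s, t, hs, ht, hst⟩ := exists_sq_eq_sq_eq_mul_eq (x := x / 2) (y := y / 2) (z := z / 2)
    (by linear_combination h / 4)
  let H : Matrix (Fin 2) (Fin 2) ℂ := !![1, 0; 0, -1]
  have hH : H.trace = 0 := by simp [H, trace_fin_two]
  have hHH : (H * H).trace = 2 := by simp [H, trace_fin_two]; norm_num
  refine ⟨s • H, t • H, by rw [trace_smul, hH, smul_zero], by rw [trace_smul, hH, smul_zero],
    by rw [smul_mul_smul_comm, smul_mul_smul_comm, mul_comm], ?_, ?_, ?_⟩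
  · rw [trace_smul_mul_smul, hHH, ← sq, hs]; ring
  · rw [trace_smul_mul_smul, hHH, ← sq, ht]; ring
  · rw [trace_smul_mul_smul, hHH, hst]; ring
end

section
/- Let R = ℂ[x,y,z]/(z² − xy) be the coordinate ring of the cone, and make the polynomial ring ℂ[X,Y] into an R-algebra via the ℂ-algebra homomorphism sending x ↦ X², y ↦ Y², z ↦ XY (which is well defined since (XY)² − X²·Y² = 0). Then ℂ[X,Y] is not flat as an R-module. Moreover, the fibre over the origin, namely the ℂ-algebra ℂ[X,Y]/(X², Y², XY), is a ℂ-vector space of dimension 3. -/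
open MvPolynomial

/-- The coordinate ring `ℂ[x,y,z]/(z² − xy)` of the cone `B`. -/
noncomputable abbrev ConeRing : Type :=
  MvPolynomial (Fin 3) ℂ ⧸
    Ideal.span {(X 2 : MvPolynomial (Fin 3) ℂ) ^ 2 - X 0 * X 1}

/-- The map `ℂ[x,y,z]/(z² − xy) → ℂ[X,Y]` given by `x ↦ X²`, `y ↦ Y²`, `z ↦ XY`,
which is well defined since `(XY)² − X²·Y² = 0`. -/
noncomputable def coneToPoly : ConeRing →+* MvPolynomial (Fin 2) ℂ :=
  Ideal.Quotient.lift _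
    (aeval ![(X 0 : MvPolynomial (Fin 2) ℂ) ^ 2, X 1 ^ 2, X 0 * X 1]).toRingHom
    (by
      intro a ha
      have h : Ideal.span {(X 2 : MvPolynomial (Fin 3) ℂ) ^ 2 - X 0 * X 1} ≤
          RingHom.ker (aeval ![(X 0 : MvPolynomial (Fin 2) ℂ) ^ 2, X 1 ^ 2,
            X 0 * X 1]).toRingHom := by
        rw [Ideal.span_le, Set.singleton_subset_iff, SetLike.mem_coe, RingHom.mem_ker]
        simp only [AlgHom.toRingHom_eq_coe, RingHom.coe_coe, map_sub, map_pow, map_mul, aeval_X]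
        simp only [Matrix.cons_val_zero, Matrix.cons_val_one, Matrix.head_cons,
          Matrix.cons_val_two, Matrix.tail_cons]
        ring
      exact h ha)

/-- `ℂ[X,Y]` as an algebra (in particular a module) over the cone ring, via
`x ↦ X²`, `y ↦ Y²`, `z ↦ XY`. -/
noncomputable instance : Algebra ConeRing (MvPolynomial (Fin 2) ℂ) :=
  coneToPoly.toAlgebra

/-!
Over the cone, `x • Y = z • X` in `ℂ[X,Y]`. If `ℂ[X,Y]` were flat, the equational criterion
would write `Y = ∑ⱼ aⱼ • yⱼ` with `x aⱼ = z bⱼ` for every `j`. Every element of the cone ring maps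
to a constant plus an element of `𝔪² = (X, Y)²`, and comparing coefficients of `X²` in the image
`X² aⱼ = XY bⱼ` of that relation shows that this constant vanishes for the `aⱼ`. Hence every `aⱼ • yⱼ` lies
in `𝔪²`, and so has no `Y`-coefficient, a contradiction. The fibre over the origin is
`ℂ[X,Y]/𝔪²`, whose basis is given by the monomials `1, X, Y` of degree `< 2`.
-/

namespace Finsupp

theorem exists_eq_single_of_degree_eq_one {σ : Type*} {d : σ →₀ ℕ} (hd : d.degree = 1) :
    ∃ i, d = single i 1 := by
  obtain ⟨i, hi⟩ : d.support.Nonempty := by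
    rw [support_nonempty_iff]
    rintro rfl
    simp at hd
  have hdi : d i = 1 :=
    le_antisymm (hd ▸ le_degree i d) (Nat.one_le_iff_ne_zero.2 (mem_support_iff.1 hi))
  obtain ⟨e, rfl⟩ := le_iff_exists_add.mp (single_le_iff.2 hdi.ge)
  simp only [map_add, degree_single, add_eq_left, degree_eq_zero_iff] at hd
  exact ⟨i, by rw [hd, add_zero]⟩

end Finsupp

namespace MvPolynomial

variable {σ τ R : Type*} [CommRing R]

theorem aeval_sub_algebraMap_constantCoeff_mem {S : Type*} [CommRing S] [Algebra R S]
    {I : Ideal S} {g : τ → S} (hg : ∀ i, g i ∈ I) (q : MvPolynomial τ R) :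
    aeval g q - algebraMap R S (constantCoeff q) ∈ I := by
  rw [← Ideal.Quotient.eq, ← aeval_zero, ← Ideal.Quotient.mkₐ_eq_mk R, ← AlgHom.comp_apply,
    ← AlgHom.comp_apply, comp_aeval, comp_aeval]
  congr 2
  funext i
  simpa [Ideal.Quotient.eq_zero_iff_mem] using hg i

theorem mem_idealOfVars_sq_iff (p : MvPolynomial σ R) :
    p ∈ idealOfVars σ R ^ 2 ↔ coeff 0 p = 0 ∧ ∀ i, coeff (Finsupp.single i 1) p = 0 := by
  rw [mem_pow_idealOfVars_iff']
  refine ⟨fun h => ⟨h 0 (by simp), fun i => h _ (by simp)⟩, fun ⟨h0, h1⟩ d hd => ?_⟩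
  obtain hd | hd : d.degree = 0 ∨ d.degree = 1 := by omega
  · rwa [(Finsupp.degree_eq_zero_iff d).1 hd]
  · obtain ⟨i, rfl⟩ := Finsupp.exists_eq_single_of_degree_eq_one hd
    exact h1 i

theorem coeff_zero_of_sub_C_mem_idealOfVars_sq {p : MvPolynomial σ R} {c : R}
    (hp : p - C c ∈ idealOfVars σ R ^ 2) : coeff 0 p = c := by
  have := ((mem_idealOfVars_sq_iff _).1 hp).1
  rwa [coeff_sub, coeff_zero_C, sub_eq_zero] at this

theorem coeff_single_one_mul_of_sub_C_mem_idealOfVars_sq {p : MvPolynomial σ R} {c : R}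
    (hp : p - C c ∈ idealOfVars σ R ^ 2) (i : σ) (q : MvPolynomial σ R) :
    coeff (Finsupp.single i 1) (p * q) = c * coeff (Finsupp.single i 1) q := by
  have := ((mem_idealOfVars_sq_iff _).1 (Ideal.mul_mem_right q _ hp)).2 i
  rwa [sub_mul, coeff_sub, coeff_C_mul, sub_eq_zero] at this

theorem span_X_sq_X_sq_X_mul_X_eq_idealOfVars_sq :
    Ideal.span {(X 0 : MvPolynomial (Fin 2) R) ^ 2, X 1 ^ 2, X 0 * X 1} =
      idealOfVars (Fin 2) R ^ 2 := by
  rw [sq (idealOfVars _ _), idealOfVars, Ideal.span_mul_span']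
  apply le_antisymm
  · rw [Ideal.span_le]
    rintro _ (rfl | rfl | rfl) <;> apply Ideal.subset_span <;> simp [sq, Set.mem_mul]
  · rw [Ideal.span_le]
    rintro _ ⟨_, ⟨i, rfl⟩, _, ⟨j, rfl⟩, rfl⟩
    fin_cases i <;> fin_cases j <;> exact Ideal.subset_span (by simp [sq, mul_comm])

variable (σ R) in
noncomputable def constAndLinearCoeffs : MvPolynomial σ R →ₗ[R] R × (σ → R) :=
  (lcoeff R 0).prod (LinearMap.pi fun i => lcoeff R (Finsupp.single i 1))

theorem ker_constAndLinearCoeffs :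
    LinearMap.ker (constAndLinearCoeffs σ R) = (idealOfVars σ R ^ 2).restrictScalars R := by
  ext p
  simp [constAndLinearCoeffs, LinearMap.ker_prod, LinearMap.ker_pi, mem_idealOfVars_sq_iff]

theorem constAndLinearCoeffs_surjective [Fintype σ] :
    Function.Surjective (constAndLinearCoeffs σ R) := by
  classical
  rintro ⟨c, v⟩
  refine ⟨C c + ∑ i, C (v i) * X i, ?_⟩
  ext
  · simp [constAndLinearCoeffs, coeff_sum, coeff_C_mul]
  · simp [constAndLinearCoeffs, coeff_sum, coeff_C_mul, coeff_X, coeff_C,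
      Finsupp.single_eq_single_iff, eq_comm]

theorem finrank_quotient_idealOfVars_sq [Fintype σ] {K : Type*} [Field K] :
    Module.finrank K (MvPolynomial σ K ⧸ idealOfVars σ K ^ 2) = Fintype.card σ + 1 := by
  rw [← (Submodule.Quotient.restrictScalarsEquiv K _).finrank_eq, ← ker_constAndLinearCoeffs,
    (LinearMap.quotKerEquivOfSurjective _ constAndLinearCoeffs_surjective).finrank_eq]
  simp [add_comm]

end MvPolynomial

theorem coneToPoly_mk (q : MvPolynomial (Fin 3) ℂ) :
    coneToPoly (Ideal.Quotient.mk _ q) = aeval ![X 0 ^ 2, X 1 ^ 2, X 0 * X 1] q :=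
  Ideal.Quotient.lift_mk _ _ _

theorem exists_coneToPoly_sub_C_mem_idealOfVars_sq (r : ConeRing) :
    ∃ c, coneToPoly r - C c ∈ idealOfVars (Fin 2) ℂ ^ 2 := by
  obtain ⟨q, rfl⟩ := Ideal.Quotient.mk_surjective r
  refine ⟨constantCoeff q, coneToPoly_mk q ▸ aeval_sub_algebraMap_constantCoeff_mem ?_ q⟩
  intro i
  rw [← span_X_sq_X_sq_X_mul_X_eq_idealOfVars_sq]
  fin_cases i <;> exact Ideal.subset_span (by simp)

theorem eq_zero_of_coneToPoly_sub_C_mem_idealOfVars_sq {a b : ConeRing} {c : ℂ}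
    (hab : (Ideal.Quotient.mk _ (X 0) : ConeRing) * a = Ideal.Quotient.mk _ (X 2) * b)
    (ha : coneToPoly a - C c ∈ idealOfVars (Fin 2) ℂ ^ 2) : c = 0 := by
  have h := congrArg (coeff (Finsupp.single 0 2) ∘ coneToPoly) hab
  simp only [Function.comp_apply, map_mul, coneToPoly_mk, aeval_X] at h
  simpa [X_pow_eq_monomial, coeff_monomial_mul', coeff_zero_of_sub_C_mem_idealOfVars_sq ha,
    mul_assoc, coeff_X_mul'] using h

theorem not_flat_coneRing : ¬ Module.Flat ConeRing (MvPolynomial (Fin 2) ℂ) := by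
  intro _
  have hrel : ∑ i, ![(Ideal.Quotient.mk _ (X 0) : ConeRing), -Ideal.Quotient.mk _ (X 2)] i •
      ![(X 1 : MvPolynomial (Fin 2) ℂ), X 0] i = 0 := by
    simp only [Fin.sum_univ_two, Matrix.cons_val_zero, Matrix.cons_val_one, Matrix.cons_val_fin_one,
      Algebra.smul_def, RingHom.algebraMap_toAlgebra, map_neg, coneToPoly_mk, aeval_X,
      Matrix.cons_val]
    ring
  obtain ⟨k, a, y, hy, ha⟩ :=
    Module.Flat.isTrivialRelation_of_sum_smul_eq_zero (R := ConeRing) hrel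
  choose c hc using fun j => exists_coneToPoly_sub_C_mem_idealOfVars_sq (a 0 j)
  have hc0 (j : Fin k) : c j = 0 :=
    eq_zero_of_coneToPoly_sub_C_mem_idealOfVars_sq (b := a 1 j)
      (by linear_combination (by simpa [Fin.sum_univ_two] using ha j : _ = (0 : ConeRing)))
      (hc j)
  have hY := congrArg (coeff (Finsupp.single 1 1)) (hy 0)
  simp [coeff_sum, Algebra.smul_def, RingHom.algebraMap_toAlgebra,
    coeff_single_one_mul_of_sub_C_mem_idealOfVars_sq (hc _), hc0] at hY

/-- The universal spectral cover is not flat: `ℂ[X,Y]` is not flat as a module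
over `ℂ[x,y,z]/(z² − xy)`, and the fibre over the origin, `ℂ[X,Y]/(X², Y², XY)`, is a
`ℂ`-vector space of dimension `3`. -/
theorem statement7 :
    ¬ Module.Flat ConeRing (MvPolynomial (Fin 2) ℂ) ∧
    Module.finrank ℂ
      (MvPolynomial (Fin 2) ℂ ⧸
        Ideal.span {(X 0 : MvPolynomial (Fin 2) ℂ) ^ 2, (X 1 : MvPolynomial (Fin 2) ℂ) ^ 2,
          (X 0 : MvPolynomial (Fin 2) ℂ) * X 1}) = 3 := by
  refine ⟨not_flat_coneRing, ?_⟩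
  rw [span_X_sq_X_sq_X_mul_X_eq_idealOfVars_sq, finrank_quotient_idealOfVars_sq, Fintype.card_fin]
end

section
/- Let A and B be traceless 2×2 complex matrices with AB = BA, with a common eigenvector: Av = λ₁v, Bv = λ₂v for some nonzero v ∈ ℂ², and suppose (λ₁, λ₂) ≠ (0,0). Let Φ : ℂ[X,Y] → M₂(ℂ) be the unique ℂ-algebra homomorphism with Φ(X) = A and Φ(Y) = B. Then ker Φ is exactly the ideal I = (X² − λ₁², Y² − λ₂², XY − λ₁λ₂) of ℂ[X,Y]. -/
/-!
For a traceless `2 × 2` matrix, Cayley–Hamilton reads `M ^ 2 = -det M • 1`; polarizing it at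
`A + B` shows that commuting traceless `A`, `B` have scalar product `A * B`. Evaluating on the
common eigenvector, the scalars are `λ₁ ^ 2`, `λ₂ ^ 2` and `λ₁ λ₂`, so `I ⊆ ker Φ`. Conversely,
if say `λ₁ ≠ 0`, then `Y ≡ (λ₂ / λ₁) X` modulo `I`, so every polynomial is congruent to some
`α + β X`; its image `α • 1 + β • A` vanishes only for `α = β = 0`, since `1` and the nonzero
traceless matrix `A` are linearly independent.
-/

open MvPolynomial Matrix

namespace Matrix

variable {K : Type*} [Field K]

theorem sq_eq_neg_det_smul_one_of_trace_eq_zero {R : Type*} [CommRing R]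
    {M : Matrix (Fin 2) (Fin 2) R} (hM : M.trace = 0) : M ^ 2 = -M.det • 1 := by
  rw [trace_fin_two] at hM
  ext i j
  fin_cases i <;> fin_cases j <;> simp [sq, mul_apply, det_fin_two]
  · linear_combination M 0 0 * hM
  · linear_combination M 0 1 * hM
  · linear_combination M 1 0 * hM
  · linear_combination M 1 1 * hM

theorem eq_of_smul_one_mulVec_eq_smul {n : Type*} [Fintype n] [DecidableEq n] {c d : K}
    {v : n → K} (hv : v ≠ 0) (h : (c • (1 : Matrix n n K)) *ᵥ v = d • v) : c = d := by
  rw [smul_mulVec, one_mulVec] at h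
  exact smul_left_injective K hv h

theorem sq_eq_sq_smul_one_of_trace_eq_zero {M : Matrix (Fin 2) (Fin 2) K} (hM : M.trace = 0)
    {l : K} {v : Fin 2 → K} (hv : v ≠ 0) (hMv : M *ᵥ v = l • v) : M ^ 2 = l ^ 2 • 1 := by
  have hsq := sq_eq_neg_det_smul_one_of_trace_eq_zero hM
  have hdet : -M.det = l ^ 2 := eq_of_smul_one_mulVec_eq_smul hv <| by
    rw [← hsq, sq, ← mulVec_mulVec, hMv, mulVec_smul, hMv, smul_smul, sq]
  rw [hsq, hdet]

theorem exists_mul_eq_smul_one_of_commute [NeZero (2 : K)] {A B : Matrix (Fin 2) (Fin 2) K}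
    (hA : A.trace = 0) (hB : B.trace = 0) (hAB : Commute A B) : ∃ c : K, A * B = c • 1 := by
  have hsum := sq_eq_neg_det_smul_one_of_trace_eq_zero (M := A + B) (by simp [trace_add, hA, hB])
  rw [hAB.add_sq, sq_eq_neg_det_smul_one_of_trace_eq_zero hA,
    sq_eq_neg_det_smul_one_of_trace_eq_zero hB] at hsum
  refine ⟨(2 : K)⁻¹ * (A.det + B.det - (A + B).det), ?_⟩
  rw [mul_assoc, two_mul] at hsum
  have h2 : (2 : K)⁻¹ * 2 = 1 := inv_mul_cancel₀ two_ne_zero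
  linear_combination (norm := module) (2 : K)⁻¹ • hsum - h2 • (A * B)

theorem mul_eq_smul_one_of_commute [NeZero (2 : K)] {A B : Matrix (Fin 2) (Fin 2) K}
    (hA : A.trace = 0) (hB : B.trace = 0) (hAB : Commute A B) {l₁ l₂ : K} {v : Fin 2 → K}
    (hv : v ≠ 0) (hAv : A *ᵥ v = l₁ • v) (hBv : B *ᵥ v = l₂ • v) : A * B = (l₁ * l₂) • 1 := by
  obtain ⟨c, hc⟩ := exists_mul_eq_smul_one_of_commute hA hB hAB
  have hc' : c = l₁ * l₂ := eq_of_smul_one_mulVec_eq_smul hv <| by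
    rw [← hc, ← mulVec_mulVec, hBv, mulVec_smul, hAv, smul_smul, mul_comm]
  rw [hc, hc']

theorem linearIndependent_one_of_trace_eq_zero [NeZero (2 : K)] {M : Matrix (Fin 2) (Fin 2) K}
    (hM : M.trace = 0) (hM0 : M ≠ 0) : LinearIndependent K ![1, M] := by
  refine LinearIndependent.pair_iff.2 fun s t hst => ?_
  have hs : s = 0 := by
    simpa [trace_add, trace_smul, hM, two_ne_zero] using congrArg trace hst
  subst hs
  simpa [hM0] using hst

end Matrix

namespace MvPolynomial

variable {K : Type*} [Field K]

/-- In characteristic `≠ 2` and for `(a, b) ≠ 0`, the vanishing ideal of the two points `±(a, b)`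
of the `(X i, X j)`-plane. -/
noncomputable def antipodalIdeal (i j : Fin 2) (a b : K) : Ideal (MvPolynomial (Fin 2) K) :=
  Ideal.span {X i ^ 2 - C (a ^ 2), X j ^ 2 - C (b ^ 2), X i * X j - C (a * b)}

theorem antipodalIdeal_swap (i j : Fin 2) (a b : K) :
    antipodalIdeal j i b a = antipodalIdeal i j a b := by
  rw [antipodalIdeal, antipodalIdeal, mul_comm (X j), mul_comm b, Set.insert_comm]

theorem exists_sub_C_add_C_mul_X_mem_antipodalIdeal {i j : Fin 2} (hij : i ≠ j) {a : K} (b : K)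
    (ha : a ≠ 0) (p : MvPolynomial (Fin 2) K) :
    ∃ α β : K, p - (C α + C β * X i) ∈ antipodalIdeal i j a b := by
  set π := Ideal.Quotient.mk (antipodalIdeal i j a b)
  suffices ∃ α β : K, π p = π (C α + C β * X i) by
    simpa only [π, Ideal.Quotient.eq] using this
  have hx : π (X i) ^ 2 = π (C a) ^ 2 := by
    rw [← map_pow, ← map_pow, ← C_pow, Ideal.Quotient.eq]
    exact Ideal.subset_span (by simp)
  have hxy : π (X i) * π (X j) = π (C a) * π (C b) := by
    rw [← map_mul, ← map_mul, ← C_mul, Ideal.Quotient.eq]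
    exact Ideal.subset_span (by simp)
  have hinv : π (C a) * π (C a⁻¹) = 1 := by
    rw [← map_mul, ← C_mul, mul_inv_cancel₀ ha, C_1, map_one]
  -- `X j ≡ (b / a) X i`, since `a² X j ≡ X i ^ 2 X j ≡ a b X i`
  have hy : π (X j) = π (C b) * π (C a⁻¹) * π (X i) := by
    linear_combination (-(1 + π (C a) * π (C a⁻¹)) * π (X j) + π (C b) * π (C a⁻¹) * π (X i)) * hinv
      - π (C a⁻¹) ^ 2 * π (X j) * hx + π (C a⁻¹) ^ 2 * π (X i) * hxy
  induction p using MvPolynomial.induction_on with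
  | C c => exact ⟨c, 0, by simp⟩
  | add p q hp hq =>
    obtain ⟨α, β, hp⟩ := hp
    obtain ⟨α', β', hq⟩ := hq
    exact ⟨α + α', β + β', by simp only [map_add, map_mul, hp, hq]; ring⟩
  | mul_X q k hq =>
    obtain ⟨α, β, hq⟩ := hq
    obtain rfl | rfl : k = i ∨ k = j := by omega
    · exact ⟨β * a ^ 2, α, by
        simp only [map_add, map_mul, map_pow, hq]; linear_combination π (C β) * hx⟩
    · exact ⟨β * a * b, α * b * a⁻¹, by
        simp only [map_add, map_mul, hq]; linear_combination π (C α) * hy + π (C β) * hxy⟩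

theorem ker_eq_antipodalIdeal {S : Type*} [Ring S] [Algebra K S]
    (Φ : MvPolynomial (Fin 2) K →ₐ[K] S) {i j : Fin 2} (hij : i ≠ j) {a b : K} (ha : a ≠ 0)
    (hx : Φ (X i) ^ 2 = a ^ 2 • 1) (hy : Φ (X j) ^ 2 = b ^ 2 • 1)
    (hxy : Φ (X i) * Φ (X j) = (a * b) • 1) (hind : LinearIndependent K ![1, Φ (X i)]) :
    RingHom.ker Φ = antipodalIdeal i j a b := by
  have hC (c : K) : Φ (C c) = c • 1 := by
    rw [← algebraMap_eq, Φ.commutes, Algebra.algebraMap_eq_smul_one]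
  have hle : antipodalIdeal i j a b ≤ RingHom.ker Φ := by
    simp only [antipodalIdeal, Ideal.span_le, Set.insert_subset_iff, Set.singleton_subset_iff,
      SetLike.mem_coe, RingHom.mem_ker, map_sub, hC]
    simp only [map_pow, map_mul, hx, hy, hxy, sub_self, and_self]
  refine le_antisymm (fun p hp => ?_) hle
  obtain ⟨α, β, hmem⟩ := exists_sub_C_add_C_mul_X_mem_antipodalIdeal hij b ha p
  have hzero : α • (1 : S) + β • Φ (X i) = 0 := by
    have h := RingHom.mem_ker.1 (hle hmem)
    rwa [map_sub, RingHom.mem_ker.1 hp, map_add, map_mul, hC, hC, smul_mul_assoc, one_mul,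
      zero_sub, neg_eq_zero] at h
  obtain ⟨rfl, rfl⟩ := LinearIndependent.pair_iff.1 hind α β hzero
  simpa using hmem

end MvPolynomial

/-- If `A`, `B` are commuting traceless `2×2` complex matrices with a common
eigenvector `v` of eigenvalues `(λ₁, λ₂) ≠ (0,0)`, and `Φ : ℂ[X,Y] → M₂(ℂ)` is the unique
`ℂ`-algebra homomorphism with `Φ(X) = A`, `Φ(Y) = B`, then
`ker Φ = (X² − λ₁², Y² − λ₂², XY − λ₁λ₂)`. -/
theorem statement9 (A B : Matrix (Fin 2) (Fin 2) ℂ)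
    (hA : A.trace = 0) (hB : B.trace = 0) (hAB : A * B = B * A)
    (l1 l2 : ℂ) (hl : (l1, l2) ≠ (0, 0)) (v : Fin 2 → ℂ) (hv : v ≠ 0)
    (hAv : A.mulVec v = l1 • v) (hBv : B.mulVec v = l2 • v)
    (Φ : MvPolynomial (Fin 2) ℂ →ₐ[ℂ] Matrix (Fin 2) (Fin 2) ℂ)
    (hX : Φ (X 0) = A) (hY : Φ (X 1) = B) :
    RingHom.ker Φ =
      Ideal.span {(X 0 : MvPolynomial (Fin 2) ℂ) ^ 2 - C (l1 ^ 2),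
        (X 1 : MvPolynomial (Fin 2) ℂ) ^ 2 - C (l2 ^ 2),
        (X 0 : MvPolynomial (Fin 2) ℂ) * X 1 - C (l1 * l2)} := by
  subst hX hY
  change _ = antipodalIdeal 0 1 l1 l2
  have hA2 := sq_eq_sq_smul_one_of_trace_eq_zero hA hv hAv
  have hB2 := sq_eq_sq_smul_one_of_trace_eq_zero hB hv hBv
  have hprod := mul_eq_smul_one_of_commute hA hB hAB hv hAv hBv
  have hne {M : Matrix (Fin 2) (Fin 2) ℂ} {l : ℂ} (hMv : M *ᵥ v = l • v) (hl : l ≠ 0) : M ≠ 0 := by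
    rintro rfl
    simp [eq_comm, hl, hv] at hMv
  rcases not_and_or.1 (by simpa using hl) with h1 | h2
  · exact ker_eq_antipodalIdeal Φ zero_ne_one h1 hA2 hB2 hprod
      (linearIndependent_one_of_trace_eq_zero hA (hne hAv h1))
  · have hBA : Φ (X 1) * Φ (X 0) = (l2 * l1) • 1 := by rw [← hAB, hprod, mul_comm]
    rw [← antipodalIdeal_swap]
    exact ker_eq_antipodalIdeal Φ one_ne_zero h2 hB2 hA2 hBA
      (linearIndependent_one_of_trace_eq_zero hB (hne hBv h2))
end

section
/- Let (λ₁, λ₂) ∈ ℂ² with (λ₁, λ₂) ≠ (0,0), and let f ∈ ℂ[X,Y] satisfy f(λ₁, λ₂) = 0 and f(−λ₁, −λ₂) = 0. Then f lies in the ideal (X² − λ₁², Y² − λ₂², XY − λ₁λ₂) of ℂ[X,Y]. -/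
/-!
Let `m_p = (X_i - p_i)_i` be the ideal of the point `p` and `I = (X_i X_j - p_i p_j)_{i,j}`.
If `p_k ≠ 0`, then `p_k (p_j X_i - p_i X_j) = X_j (X_i X_k - p_i p_k) - X_i (X_j X_k - p_j p_k)`
puts the linear forms `p_j X_i - p_i X_j` into `I`, hence `m_p m_{-p} ⊆ I`. Also
`m_p + m_{-p}` contains the unit `2 p_k`, so `m_p ∩ m_{-p} = m_p m_{-p} ⊆ I`.
-/

open MvPolynomial

namespace MvPolynomial

variable {σ R K : Type*}

noncomputable def pointIdeal [CommRing R] (p : σ → R) : Ideal (MvPolynomial σ R) :=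
  Ideal.span (Set.range fun i ↦ X i - C (p i))

theorem sub_C_eval_mem_pointIdeal [CommRing R] (p : σ → R) (f : MvPolynomial σ R) :
    f - C (eval p f) ∈ pointIdeal p := by
  rw [← Ideal.Quotient.eq]
  have hmk : Ideal.Quotient.mk (pointIdeal p) = (Ideal.Quotient.mk _).comp (C.comp (eval p)) :=
    ringHom_ext (fun _ ↦ by simp) fun i ↦ by
      rw [RingHom.comp_apply, RingHom.comp_apply, eval_X]
      exact Ideal.Quotient.eq.mpr (Ideal.subset_span ⟨i, rfl⟩)
  exact congr($hmk f)

theorem mem_pointIdeal_of_eval_eq_zero [CommRing R] {p : σ → R} {f : MvPolynomial σ R}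
    (hf : eval p f = 0) : f ∈ pointIdeal p := by
  simpa [hf] using sub_C_eval_mem_pointIdeal p f

/-- The ideal of the fibre over `p pᵀ` of the map `x ↦ x xᵀ`. -/
noncomputable def outerSquareFibreIdeal [CommRing R] (p : σ → R) : Ideal (MvPolynomial σ R) :=
  Ideal.span (Set.range fun ij : σ × σ ↦ X ij.1 * X ij.2 - C (p ij.1 * p ij.2))

variable [Field K] {p : σ → K}

theorem C_mul_X_sub_C_mul_X_mem_outerSquareFibreIdeal {k : σ} (hk : p k ≠ 0) (i j : σ) :
    C (p j) * X i - C (p i) * X j ∈ outerSquareFibreIdeal p := by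
  have hgen : ∀ a b, X a * X b - C (p a * p b) ∈ outerSquareFibreIdeal p :=
    fun a b ↦ Ideal.subset_span ⟨(a, b), rfl⟩
  rw [← Ideal.unit_mul_mem_iff_mem _ ((isUnit_iff_ne_zero.mpr hk).map C)]
  have hcomb : C (p k) * (C (p j) * X i - C (p i) * X j) =
      X j * (X i * X k - C (p i * p k)) - X i * (X j * X k - C (p j * p k)) := by
    simp only [map_mul]; ring
  rw [hcomb]
  exact sub_mem (Ideal.mul_mem_left _ _ (hgen i k)) (Ideal.mul_mem_left _ _ (hgen j k))

theorem pointIdeal_mul_pointIdeal_neg_le (hp : p ≠ 0) :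
    pointIdeal p * pointIdeal (-p) ≤ outerSquareFibreIdeal p := by
  obtain ⟨k, hk⟩ := Function.ne_iff.mp hp
  rw [pointIdeal, pointIdeal, Ideal.span_mul_span', Ideal.span_le]
  rintro _ ⟨_, ⟨i, rfl⟩, _, ⟨j, rfl⟩, rfl⟩
  have hprod : (X i - C (p i)) * (X j - C ((-p) j)) =
      (X i * X j - C (p i * p j)) + (C (p j) * X i - C (p i) * X j) := by
    simp only [Pi.neg_apply, map_neg, map_mul]; ring
  dsimp only
  rw [SetLike.mem_coe, hprod]
  exact add_mem (Ideal.subset_span ⟨(i, j), rfl⟩)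
    (C_mul_X_sub_C_mul_X_mem_outerSquareFibreIdeal hk i j)

theorem pointIdeal_sup_pointIdeal_neg [NeZero (2 : K)] (hp : p ≠ 0) :
    pointIdeal p ⊔ pointIdeal (-p) = ⊤ := by
  obtain ⟨k, hk⟩ := Function.ne_iff.mp hp
  have hX : ∀ q : σ → K, X k - C (q k) ∈ pointIdeal q := fun q ↦ Ideal.subset_span ⟨k, rfl⟩
  have hdiff : C (2 * p k) = (X k - C ((-p) k)) - (X k - C (p k)) := by
    simp only [Pi.neg_apply, map_neg, map_mul, map_ofNat]; ring
  refine Ideal.eq_top_of_isUnit_mem _ (x := C (2 * p k)) ?_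
    ((isUnit_iff_ne_zero.mpr (mul_ne_zero two_ne_zero hk)).map C)
  rw [hdiff]
  exact sub_mem (Ideal.mem_sup_right (hX _)) (Ideal.mem_sup_left (hX _))

theorem mem_outerSquareFibreIdeal_of_eval_eq_zero [NeZero (2 : K)] (hp : p ≠ 0)
    {f : MvPolynomial σ K} (hf : eval p f = 0) (hf' : eval (-p) f = 0) :
    f ∈ outerSquareFibreIdeal p := by
  apply pointIdeal_mul_pointIdeal_neg_le hp
  rw [Ideal.mul_eq_inf_of_coprime (pointIdeal_sup_pointIdeal_neg hp)]
  exact ⟨mem_pointIdeal_of_eval_eq_zero hf, mem_pointIdeal_of_eval_eq_zero hf'⟩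

end MvPolynomial

/-- For `(λ₁, λ₂) ≠ (0,0)`, any polynomial `f ∈ ℂ[X,Y]` vanishing at both
`(λ₁, λ₂)` and `(−λ₁, −λ₂)` lies in the ideal `(X² − λ₁², Y² − λ₂², XY − λ₁λ₂)`. -/
theorem statement10 (l1 l2 : ℂ) (hl : (l1, l2) ≠ (0, 0))
    (f : MvPolynomial (Fin 2) ℂ)
    (h1 : eval ![l1, l2] f = 0) (h2 : eval ![-l1, -l2] f = 0) :
    f ∈ Ideal.span {(X 0 : MvPolynomial (Fin 2) ℂ) ^ 2 - C (l1 ^ 2),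
      (X 1 : MvPolynomial (Fin 2) ℂ) ^ 2 - C (l2 ^ 2),
      (X 0 : MvPolynomial (Fin 2) ℂ) * X 1 - C (l1 * l2)} := by
  have hp : ![l1, l2] ≠ 0 := by
    contrapose! hl
    simpa using And.intro (congr_fun hl 0) (congr_fun hl 1)
  have hf := mem_outerSquareFibreIdeal_of_eval_eq_zero hp h1 (by simpa using h2)
  refine Ideal.span_le.mpr ?_ hf
  rintro _ ⟨⟨i, j⟩, rfl⟩
  apply Ideal.subset_span
  fin_cases i <;> fin_cases j <;> simp [sq, mul_comm]
end

section
/- Let A = [[0,1],[0,0]] ∈ M₂(ℂ), let a ∈ ℂ, and let B = aA. Let Φ : ℂ[X,Y] → M₂(ℂ) be the unique ℂ-algebra homomorphism with Φ(X) = A and Φ(Y) = B. Then the polynomial f(X,Y) = aX − Y lies in ker Φ but does not lie in the ideal (X², Y², XY) of ℂ[X,Y]. In particular, the containment (X², Y², XY) ⊆ ker Φ is strict. -/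
open MvPolynomial Matrix

/-!
The relation `Y = aX` between the images of the variables puts `aX − Y` in the kernel, and since
`A² = 0` every quadratic monomial is killed as well. To separate `aX − Y` from `(X², Y², XY)`,
evaluate at the point `(0, ε)` over the dual numbers: quadratic monomials vanish there, while
`aX − Y` is sent to `−ε ≠ 0`.
-/

namespace MvPolynomial

variable {σ R A : Type*}

theorem C_mul_X_sub_X_mem_ker [CommRing R] [Ring A] [Algebra R A]
    (Φ : MvPolynomial σ R →ₐ[R] A) {i j : σ} {a : R} (h : Φ (X j) = a • Φ (X i)) :
    C a * X i - X j ∈ RingHom.ker Φ := by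
  rw [RingHom.mem_ker, map_sub, _root_.map_mul, h, ← algebraMap_eq, AlgHom.commutes,
    Algebra.smul_def, sub_self]

theorem span_quadratic_monomials_le_ker [CommSemiring R] [Semiring A] [Algebra R A]
    (Φ : MvPolynomial σ R →ₐ[R] A) (i j : σ)
    (hi : Φ (X i) * Φ (X i) = 0) (hj : Φ (X j) * Φ (X j) = 0) (hij : Φ (X i) * Φ (X j) = 0) :
    Ideal.span {X i ^ 2, X j ^ 2, X i * X j} ≤ RingHom.ker Φ := by
  rw [Ideal.span_le]
  rintro p (rfl | rfl | rfl) <;> simpa [pow_two]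

theorem C_mul_X_sub_X_notMem_span_quadratic_monomials [CommRing R] [Nontrivial R]
    {i j : σ} (hij : i ≠ j) (a : R) :
    C a * X i - X j ∉ Ideal.span {(X i : MvPolynomial σ R) ^ 2, X j ^ 2, X i * X j} := by
  classical
  set φ : MvPolynomial σ R →ₐ[R] DualNumber R := aeval (Pi.single j DualNumber.eps)
  have hφi : φ (X i) = 0 := by simp [φ, hij]
  have hφj : φ (X j) = DualNumber.eps := by simp [φ]
  intro h
  have hφ := span_quadratic_monomials_le_ker φ i j (by simp [hφi]) (by simp [hφj])
    (by simp [hφi]) h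
  rw [RingHom.mem_ker, map_sub, _root_.map_mul, hφi, hφj, mul_zero, zero_sub, neg_eq_zero] at hφ
  exact one_ne_zero (congrArg TrivSqZeroExt.snd hφ)

end MvPolynomial

theorem upper_nilpotent_mul_self :
    (!![0, 1; 0, 0] : Matrix (Fin 2) (Fin 2) ℂ) * !![0, 1; 0, 0] = 0 := by
  ext i j
  fin_cases i <;> fin_cases j <;> simp [Matrix.mul_apply]

/-- For `A = [[0,1],[0,0]]`, `B = aA` and `Φ : ℂ[X,Y] → M₂(ℂ)` the unique
`ℂ`-algebra homomorphism with `Φ(X) = A`, `Φ(Y) = B`, the polynomial `aX − Y` lies in `ker Φ`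
but not in the ideal `(X², Y², XY)`; in particular `(X², Y², XY) ⊊ ker Φ`. -/
theorem statement13 (a : ℂ)
    (Φ : MvPolynomial (Fin 2) ℂ →ₐ[ℂ] Matrix (Fin 2) (Fin 2) ℂ)
    (hX : Φ (X 0) = !![0, 1; 0, 0])
    (hY : Φ (X 1) = a • !![(0 : ℂ), 1; 0, 0]) :
    (C a * X 0 - X 1 ∈ RingHom.ker Φ) ∧
    (C a * X 0 - X 1 ∉ Ideal.span {(X 0 : MvPolynomial (Fin 2) ℂ) ^ 2,
      (X 1 : MvPolynomial (Fin 2) ℂ) ^ 2, (X 0 : MvPolynomial (Fin 2) ℂ) * X 1}) ∧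
    Ideal.span {(X 0 : MvPolynomial (Fin 2) ℂ) ^ 2,
      (X 1 : MvPolynomial (Fin 2) ℂ) ^ 2, (X 0 : MvPolynomial (Fin 2) ℂ) * X 1} <
      RingHom.ker Φ := by
  have hmem : C a * X 0 - X 1 ∈ RingHom.ker Φ := C_mul_X_sub_X_mem_ker Φ (by rw [hX, hY])
  have hnotMem :=
    C_mul_X_sub_X_notMem_span_quadratic_monomials (σ := Fin 2) (R := ℂ) Fin.zero_ne_one a
  have hle := span_quadratic_monomials_le_ker Φ 0 1
    (by rw [hX, upper_nilpotent_mul_self])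
    (by rw [hY, smul_mul_smul, upper_nilpotent_mul_self, smul_zero])
    (by rw [hX, hY, mul_smul_comm, upper_nilpotent_mul_self, smul_zero])
  exact ⟨hmem, hnotMem, SetLike.lt_iff_le_and_exists.2 ⟨hle, _, hmem, hnotMem⟩⟩
end

section
/- Let R be a commutative ring, let z, a₁, a₂, a₃ ∈ R, let n ≥ m be natural numbers, and set b₁ = zⁿa₁, b₂ = a₂ and b₃ = zᵐa₃. In the quotient ring S = R[X,Y]/(X² − b₁, Y² − b₂, XY − b₃), denoting by X, Y the images of the variables, one has b₃·X = b₁·Y, and consequently zᵐ·(a₃·X − z^{n−m}·a₁·Y) = 0 in S. In particular, if R is a domain in which zᵐ ≠ 0 and a₃X − z^{n−m}a₁Y ≠ 0 in S, then a₃X − z^{n−m}a₁Y is a torsion element of the R-module S. -/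
open MvPolynomial

theorem Ideal.mul_sub_mul_mem_of_sq_sub_mem_of_mul_sub_mem {A : Type*} [CommRing A]
    {I : Ideal A} {x y c₁ c₃ : A} (hx : x ^ 2 - c₁ ∈ I) (hxy : x * y - c₃ ∈ I) :
    c₃ * x - c₁ * y ∈ I := by
  have hcomb : c₃ * x - c₁ * y = y * (x ^ 2 - c₁) - x * (x * y - c₃) := by ring
  rw [hcomb]
  exact sub_mem (I.mul_mem_left y hx) (I.mul_mem_left x hxy)

theorem statement15_general {R : Type*} [CommRing R] (z a₁ a₃ : R) (n m : ℕ) (hnm : m ≤ n)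
    (b₁ b₂ b₃ : R) (hb₁ : b₁ = z ^ n * a₁) (hb₃ : b₃ = z ^ m * a₃)
    (I : Ideal (MvPolynomial (Fin 2) R))
    (hI : I = Ideal.span {(X 0 : MvPolynomial (Fin 2) R) ^ 2 - C b₁,
      (X 1 : MvPolynomial (Fin 2) R) ^ 2 - C b₂,
      (X 0 : MvPolynomial (Fin 2) R) * X 1 - C b₃}) :
    Ideal.Quotient.mk I (C b₃ * X 0) = Ideal.Quotient.mk I (C b₁ * X 1) ∧
    (z ^ m) • Ideal.Quotient.mk I (C a₃ * X 0 - C (z ^ (n - m) * a₁) * X 1) = 0 ∧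
    (IsDomain R → z ^ m ≠ 0 →
      Ideal.Quotient.mk I (C a₃ * X 0 - C (z ^ (n - m) * a₁) * X 1) ≠ 0 →
      Ideal.Quotient.mk I (C a₃ * X 0 - C (z ^ (n - m) * a₁) * X 1) ∈
        Submodule.torsion R (MvPolynomial (Fin 2) R ⧸ I)) := by
  have hrel : C b₃ * X 0 - C b₁ * X 1 ∈ I :=
    Ideal.mul_sub_mul_mem_of_sq_sub_mem_of_mul_sub_mem
      (hI ▸ Ideal.subset_span (by simp)) (hI ▸ Ideal.subset_span (by simp))
  have hfactor : C b₃ * X 0 - C b₁ * X 1 =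
      C (z ^ m) * (C a₃ * X 0 - C (z ^ (n - m) * a₁) * X 1 : MvPolynomial (Fin 2) R) := by
    rw [hb₁, hb₃, ← pow_mul_pow_sub z hnm]
    simp only [map_mul]
    ring
  have hkill : (z ^ m) • Ideal.Quotient.mk I (C a₃ * X 0 - C (z ^ (n - m) * a₁) * X 1) = 0 := by
    rw [← Ideal.Quotient.mkₐ_eq_mk R, ← map_smul, smul_eq_C_mul, ← hfactor,
      Ideal.Quotient.mkₐ_eq_mk, Ideal.Quotient.eq_zero_iff_mem]
    exact hrel
  exact ⟨Ideal.Quotient.eq.mpr hrel, hkill,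
    fun _ hz _ => ⟨⟨z ^ m, mem_nonZeroDivisors_of_ne_zero hz⟩, hkill⟩⟩

/-- In the local model `S = R[X,Y]/(X² − b₁, Y² − b₂, XY − b₃)` of the
spectral curve, with `b₁ = zⁿa₁`, `b₂ = a₂`, `b₃ = zᵐa₃` and `m ≤ n`, one has
`b₃·X = b₁·Y`, hence `zᵐ·(a₃X − z^{n−m}a₁Y) = 0`; in particular, if `R` is a domain with
`zᵐ ≠ 0` and `a₃X − z^{n−m}a₁Y ≠ 0` in `S`, then `a₃X − z^{n−m}a₁Y` is a torsion element of
the `R`-module `S`. -/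
theorem statement15 {R : Type*} [CommRing R] (z a₁ a₂ a₃ : R) (n m : ℕ) (hnm : m ≤ n)
    (b₁ b₂ b₃ : R) (hb₁ : b₁ = z ^ n * a₁) (hb₂ : b₂ = a₂) (hb₃ : b₃ = z ^ m * a₃)
    (I : Ideal (MvPolynomial (Fin 2) R))
    (hI : I = Ideal.span {(X 0 : MvPolynomial (Fin 2) R) ^ 2 - C b₁,
      (X 1 : MvPolynomial (Fin 2) R) ^ 2 - C b₂,
      (X 0 : MvPolynomial (Fin 2) R) * X 1 - C b₃}) :
    Ideal.Quotient.mk I (C b₃ * X 0) = Ideal.Quotient.mk I (C b₁ * X 1) ∧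
    (z ^ m) • Ideal.Quotient.mk I (C a₃ * X 0 - C (z ^ (n - m) * a₁) * X 1) = 0 ∧
    (IsDomain R → z ^ m ≠ 0 →
      Ideal.Quotient.mk I (C a₃ * X 0 - C (z ^ (n - m) * a₁) * X 1) ≠ 0 →
      Ideal.Quotient.mk I (C a₃ * X 0 - C (z ^ (n - m) * a₁) * X 1) ∈
        Submodule.torsion R (MvPolynomial (Fin 2) R ⧸ I)) :=
  statement15_general z a₁ a₃ n m hnm b₁ b₂ b₃ hb₁ hb₃ I hI
end
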